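/- arXiv:1507.03029 — 5 statements merged into one kernel-verified Lean document; each statement's English description precedes it below -/
import Mathlib

section
/- Let $q$ be a prime power and $d, r$ positive integers with $r \le d \le q$. The maximum number of common zeros in $\mathbb{P}^1(\mathbb{F}_q)$ of any $r$ linearly independent homogeneous polynomials of degree $d$ in $\mathbb{F}_q[x_0, x_1]$ is exactly $d - r + 1$. -/
/-!
Evaluation at `t ≤ d + 1` distinct points of `ℙ¹` is surjective on binary forms of degree `d`:
the product of the linear forms through all but one of the points, padded by a power of a
coordinate, vanishes exactly at the others. Hence the forms of degree `d` vanishing at `t` points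
form a space of dimension `d + 1 - t`, and `r` independent ones have at most `d + 1 - r` common
zeros. Conversely, multiplying the `r` monomials of degree `r - 1`, which have no common zero, by
the product of the linear forms through `d - r + 1 ≤ q + 1` chosen points gives `r` independent
forms whose common zeros are exactly those points.
-/

open MvPolynomial Finset
open scoped LinearAlgebra.Projectivization

theorem MvPolynomial.finrank_homogeneousSubmodule {σ R : Type*} [Fintype σ] [CommRing R]
    [Nontrivial R] (d : ℕ) :
    Module.finrank R (homogeneousSubmodule σ R d) = (Fintype.card σ + d - 1).choose d := by
  classical
  have hS : {f : σ →₀ ℕ | f.degree = d} = (univ.finsuppAntidiag d : Finset (σ →₀ ℕ)) := by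
    ext f
    simp [Finsupp.degree_eq_sum]
  rw [homogeneousSubmodule_eq_finsupp_supported, hS]
  refine (Module.finrank_eq_card_basis (basisRestrictSupport R _)).trans ?_
  simp [card_finsuppAntidiag_nat_eq_choose]

theorem MvPolynomial.finrank_homogeneousSubmodule_fin_two {R : Type*} [CommRing R] [Nontrivial R]
    (d : ℕ) : Module.finrank R (homogeneousSubmodule (Fin 2) R d) = d + 1 := by
  rw [finrank_homogeneousSubmodule, Fintype.card_fin, show 2 + d - 1 = d + 1 by omega,
    Nat.choose_succ_self_right]

section BinaryForms

variable {K : Type*} [Field K]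

def commonZeros {σ ι : Type*} (Fs : ι → MvPolynomial σ K) : Set (ℙ K (σ → K)) :=
  {x | ∀ i, eval x.rep (Fs i) = 0}

theorem commonZeros_mul_left {σ ι : Type*} {H : ι → MvPolynomial σ K} (hH : commonZeros H = ∅)
    (G : MvPolynomial σ K) : commonZeros (fun i => G * H i) = {x | eval x.rep G = 0} := by
  ext x
  simp only [commonZeros, Set.mem_ofPred_eq, map_mul, mul_eq_zero]
  refine ⟨fun hx => ?_, fun hx i => Or.inl hx⟩
  by_contra hG
  exact hH.subset (fun i => (hx i).resolve_left hG : x ∈ commonZeros H)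

theorem linearIndependent_mul_left {σ ι : Type*} {Fs : ι → MvPolynomial σ K}
    (hli : LinearIndependent K Fs) {G : MvPolynomial σ K} (hG : G ≠ 0) :
    LinearIndependent K fun i => G * Fs i :=
  hli.map' (LinearMap.mulLeft K G) (LinearMap.ker_eq_bot.mpr fun _ _ => mul_left_cancel₀ hG)

theorem Projectivization.rep_det_eq_zero_iff (u v : ℙ K (Fin 2 → K)) :
    u.rep 0 * v.rep 1 - u.rep 1 * v.rep 0 = 0 ↔ u = v := by
  rw [← not_iff_not, ← ne_eq u, ← independent_pair_iff_ne, independent_iff]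
  have := (Matrix.linearIndependent_rows_iff_isUnit (A := Matrix.of ![u.rep, v.rep]))
  rw [Matrix.isUnit_iff_isUnit_det, Matrix.det_fin_two, isUnit_iff_ne_zero] at this
  convert this.symm using 2
  · rfl
  · ext i : 1; fin_cases i <;> rfl
  · rfl

theorem Projectivization.exists_finset_card_eq_of_le [Finite K] {m : ℕ} (hm : m ≤ Nat.card K + 1) :
    ∃ S : Finset (ℙ K (Fin 2 → K)), #S = m := by
  have : Fintype (ℙ K (Fin 2 → K)) := .ofFinite _
  obtain ⟨S, -, hS⟩ := exists_subset_card_eq (s := (univ : Finset (ℙ K (Fin 2 → K)))) (n := m)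
    (by rwa [card_univ, Fintype.card_eq_nat_card,
      card_of_finrank_two K _ (Module.finrank_fin_fun K)])
  exact ⟨S, hS⟩

noncomputable def vanishingForm (p : ℙ K (Fin 2 → K)) : MvPolynomial (Fin 2) K :=
  C (p.rep 0) * X 1 - C (p.rep 1) * X 0

theorem isHomogeneous_vanishingForm (p : ℙ K (Fin 2 → K)) : (vanishingForm p).IsHomogeneous 1 :=
  (isHomogeneous_C_mul_X _ _).sub (isHomogeneous_C_mul_X _ _)

theorem eval_rep_vanishingForm_eq_zero_iff {p x : ℙ K (Fin 2 → K)} :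
    eval x.rep (vanishingForm p) = 0 ↔ x = p := by
  rw [vanishingForm, eq_comm (a := x), ← p.rep_det_eq_zero_iff x]
  simp only [map_sub, map_mul, eval_C, eval_X]

theorem vanishingForm_ne_zero (p : ℙ K (Fin 2 → K)) : vanishingForm p ≠ 0 := by
  obtain ⟨i, hi⟩ : ∃ i, p.rep i ≠ 0 := Function.ne_iff.mp p.rep_nonzero
  intro h
  fin_cases i
  · exact hi (by simpa [vanishingForm] using congrArg (eval ![0, 1]) h)
  · exact hi (by simpa [vanishingForm] using congrArg (eval ![1, 0]) h)

theorem eval_rep_prod_vanishingForm_eq_zero_iff {S : Finset (ℙ K (Fin 2 → K))}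
    {x : ℙ K (Fin 2 → K)} : eval x.rep (∏ p ∈ S, vanishingForm p) = 0 ↔ x ∈ S := by
  simp [map_prod, prod_eq_zero_iff, eval_rep_vanishingForm_eq_zero_iff]

theorem setOf_eval_rep_prod_vanishingForm_eq_zero (S : Finset (ℙ K (Fin 2 → K))) :
    {x : ℙ K (Fin 2 → K) | eval x.rep (∏ p ∈ S, vanishingForm p) = 0} = S :=
  Set.ext fun _ => eval_rep_prod_vanishingForm_eq_zero_iff

theorem isHomogeneous_prod_vanishingForm (S : Finset (ℙ K (Fin 2 → K))) :
    (∏ p ∈ S, vanishingForm p).IsHomogeneous #S := by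
  simpa using IsHomogeneous.prod S _ _ fun p _ => isHomogeneous_vanishingForm p

theorem exists_isHomogeneous_lagrange {d : ℕ} {T : Finset (ℙ K (Fin 2 → K))} (hT : #T ≤ d + 1)
    {k : ℙ K (Fin 2 → K)} (hk : k ∈ T) :
    ∃ G : MvPolynomial (Fin 2) K, G.IsHomogeneous d ∧ eval k.rep G ≠ 0 ∧
      ∀ p ∈ T, p ≠ k → eval p.rep G = 0 := by
  classical
  obtain ⟨i, hi⟩ : ∃ i, k.rep i ≠ 0 := Function.ne_iff.mp k.rep_nonzero
  refine ⟨X i ^ (d + 1 - #T) * ∏ p ∈ T.erase k, vanishingForm p, ?_, ?_, fun p hp hpk => ?_⟩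
  · convert ((isHomogeneous_X K i).pow (d + 1 - #T)).mul
      (isHomogeneous_prod_vanishingForm _) using 1
    rw [card_erase_of_mem hk]
    have := card_pos.mpr ⟨k, hk⟩
    omega
  · rw [map_mul, map_pow, eval_X]
    exact mul_ne_zero (pow_ne_zero _ hi)
      (eval_rep_prod_vanishingForm_eq_zero_iff.not.mpr (notMem_erase k T))
  · rw [map_mul, eval_rep_prod_vanishingForm_eq_zero_iff.mpr (mem_erase.mpr ⟨hpk, hp⟩), mul_zero]

instance (d : ℕ) : FiniteDimensional K (homogeneousSubmodule (Fin 2) K d) :=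
  Module.finite_of_finrank_pos (by rw [finrank_homogeneousSubmodule_fin_two]; omega)

noncomputable def evalOn {σ : Type*} (T : Finset (ℙ K (σ → K))) (d : ℕ) :
    homogeneousSubmodule σ K d →ₗ[K] (T → K) :=
  LinearMap.pi (fun p : T => (aeval p.1.rep).toLinearMap) ∘ₗ (homogeneousSubmodule σ K d).subtype

@[simp]
theorem evalOn_apply {σ : Type*} {T : Finset (ℙ K (σ → K))} {d : ℕ}
    (F : homogeneousSubmodule σ K d) (p : T) : evalOn T d F p = eval p.1.rep F := by
  simp [evalOn]

theorem evalOn_surjective {d : ℕ} {T : Finset (ℙ K (Fin 2 → K))} (hT : #T ≤ d + 1) :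
    Function.Surjective (evalOn T d) := by
  choose G hG hGk hGp using fun k : T => exists_isHomogeneous_lagrange hT k.2
  let G' (k : T) : homogeneousSubmodule (Fin 2) K d :=
    ⟨G k, (mem_homogeneousSubmodule _ _).2 (hG k)⟩
  intro w
  refine ⟨∑ k, (w k / eval k.1.rep (G k)) • G' k, funext fun m => ?_⟩
  rw [map_sum, Finset.sum_apply, sum_eq_single m]
  · simp [G', div_mul_cancel₀ _ (hGk m)]
  · intro k _ hkm
    simp [G', hGp k m m.2 (Subtype.coe_ne_coe.mpr hkm.symm)]
  · simp

theorem finrank_ker_evalOn {d : ℕ} {T : Finset (ℙ K (Fin 2 → K))} (hT : #T ≤ d + 1) :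
    Module.finrank K (LinearMap.ker (evalOn T d)) = d + 1 - #T := by
  have := LinearMap.finrank_range_add_finrank_ker (evalOn T d)
  rw [LinearMap.range_eq_top.mpr (evalOn_surjective hT), finrank_top,
    Module.finrank_fintype_fun_eq_card,
    Fintype.card_coe, finrank_homogeneousSubmodule_fin_two] at this
  omega

theorem card_add_card_le_of_subset_commonZeros {ι : Type*} [Fintype ι] {d : ℕ}
    {Fs : ι → MvPolynomial (Fin 2) K} (hli : LinearIndependent K Fs)
    (hFs : ∀ i, (Fs i).IsHomogeneous d) {T : Finset (ℙ K (Fin 2 → K))} (hT : #T ≤ d + 1)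
    (hTZ : ↑T ⊆ commonZeros Fs) : Fintype.card ι + #T ≤ d + 1 := by
  let Fs' (i : ι) : LinearMap.ker (evalOn T d) :=
    ⟨⟨Fs i, (mem_homogeneousSubmodule _ _).2 (hFs i)⟩, funext fun p => by simpa using hTZ p.2 i⟩
  have hli' : LinearIndependent K Fs' :=
    .of_comp ((homogeneousSubmodule (Fin 2) K d).subtype ∘ₗ (LinearMap.ker _).subtype) hli
  have := hli'.fintype_card_le_finrank
  rw [finrank_ker_evalOn hT] at this
  omega

theorem ncard_commonZeros_add_card_le [Finite K] {ι : Type*} [Fintype ι] [Nonempty ι] {d : ℕ}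
    {Fs : ι → MvPolynomial (Fin 2) K} (hli : LinearIndependent K Fs)
    (hFs : ∀ i, (Fs i).IsHomogeneous d) : (commonZeros Fs).ncard + Fintype.card ι ≤ d + 1 := by
  have hfin := (commonZeros Fs).toFinite
  by_contra! h
  obtain ⟨T, hTZ, hT⟩ := exists_subset_card_eq (s := hfin.toFinset) (n := d + 2 - Fintype.card ι)
    (by rw [← Set.ncard_eq_toFinset_card _ hfin]; omega)
  have := Fintype.card_pos (α := ι)
  have := card_add_card_le_of_subset_commonZeros hli hFs (T := T) (by omega) (by simpa using hTZ)
  omega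

noncomputable def binaryMonomial (n : ℕ) (i : Fin (n + 1)) : MvPolynomial (Fin 2) K :=
  X 0 ^ (n - i) * X 1 ^ (i : ℕ)

theorem isHomogeneous_binaryMonomial (n : ℕ) (i : Fin (n + 1)) :
    (binaryMonomial (K := K) n i).IsHomogeneous n := by
  have h := (isHomogeneous_X_pow (R := K) (0 : Fin 2) (n - i)).mul
    (isHomogeneous_X_pow (1 : Fin 2) i)
  rwa [Nat.sub_add_cancel i.is_le] at h

theorem linearIndependent_binaryMonomial (n : ℕ) :
    LinearIndependent K (binaryMonomial (K := K) n) := by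
  let e (i : Fin (n + 1)) : Fin 2 →₀ ℕ := .single 0 (n - i) + .single 1 (i : ℕ)
  have he : Function.Injective e := fun i j hij => Fin.ext (by simpa [e] using congrArg (· 1) hij)
  have h := (basisMonomials (Fin 2) K).linearIndependent.comp e he
  rwa [show ⇑(basisMonomials (Fin 2) K) ∘ e = binaryMonomial n by
    ext i : 1; simp [binaryMonomial, e, X_pow_eq_monomial, monomial_mul]] at h

theorem commonZeros_binaryMonomial (n : ℕ) : commonZeros (binaryMonomial (K := K) n) = ∅ := by
  refine Set.eq_empty_of_forall_notMem fun x hx => ?_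
  have h0 : x.rep 0 = 0 ∧ n ≠ 0 := by simpa [binaryMonomial] using hx 0
  have h1 : x.rep 1 = 0 ∧ n ≠ 0 := by simpa [binaryMonomial] using hx (Fin.last n)
  exact x.rep_nonzero (funext <| Fin.forall_fin_two.mpr ⟨h0.1, h1.1⟩)

theorem commonZeros_prod_vanishingForm_mul_binaryMonomial (S : Finset (ℙ K (Fin 2 → K))) (n : ℕ) :
    commonZeros (fun i => (∏ p ∈ S, vanishingForm p) * binaryMonomial n i) = S := by
  rw [commonZeros_mul_left (commonZeros_binaryMonomial n),
    setOf_eval_rep_prod_vanishingForm_eq_zero]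

end BinaryForms

/-- Let `q` be a prime power (realized as the cardinality of a finite field `K`) and
`d, r` positive integers with `r ≤ d ≤ q`. The maximum number of common zeros in
`ℙ¹(F_q)` of `r` linearly independent homogeneous polynomials of degree `d` in
`F_q[x₀,x₁]` is exactly `d - r + 1`. -/
theorem max_common_zeros_P1 (q d r : ℕ) {K : Type} [Field K] [Fintype K]
    (hq : Fintype.card K = q) (hr : 1 ≤ r) (hrd : r ≤ d) (hdq : d ≤ q) :
    IsGreatest {N : ℕ | ∃ Fs : Fin r → MvPolynomial (Fin 2) K,
        LinearIndependent K Fs ∧ (∀ i, (Fs i).IsHomogeneous d) ∧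
        N = Set.ncard {x : Projectivization K (Fin 2 → K) | ∀ i, eval x.rep (Fs i) = 0}}
      (d - r + 1) := by
  obtain ⟨n, rfl⟩ : ∃ n, r = n + 1 := ⟨r - 1, by omega⟩
  refine ⟨?_, fun N ⟨Fs, hli, hFs, hN⟩ => ?_⟩
  · obtain ⟨S, hS⟩ := Projectivization.exists_finset_card_eq_of_le (K := K) (m := d - n)
      (by rw [Nat.card_eq_fintype_card, hq]; omega)
    have hG : ∏ p ∈ S, vanishingForm p ≠ 0 :=
      prod_ne_zero_iff.mpr fun p _ => vanishingForm_ne_zero p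
    refine ⟨_, linearIndependent_mul_left (linearIndependent_binaryMonomial n) hG, fun i => ?_, ?_⟩
    · convert (isHomogeneous_prod_vanishingForm S).mul (isHomogeneous_binaryMonomial n i)
      omega
    · change _ = (commonZeros _).ncard
      rw [commonZeros_prod_vanishingForm_mul_binaryMonomial, Set.ncard_coe_finset, hS]
      omega
  · have := ncard_commonZeros_add_card_le hli hFs
    simp only [Fintype.card_fin] at this
    change N = (commonZeros Fs).ncard at hN
    omega
end

section
/- Let $1 \le d < q$ and $1 \le r \le m+1$. The sequence $H_r(d,m) = q^m - (1 + \sum_{j=1}^m \alpha_j q^{m-j})$, where $(\alpha_1,\dots,\alpha_m)$ is the $r$-th tuple in ascending lexicographic order among $m$-tuples with entries in $\{0,\dots,q-1\}$ whose coordinate sum is at least $m(q-1)-d$, simplifies to $H_r(d,m) = (d-1)q^{m-1} + \lfloor q^{m-r} \rfloor$ (with the convention $\lfloor q^{m-r} \rfloor = 0$ when $r = m+1$). -/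
/-!
Write `δⱼ = q - 1 - αⱼ` for the deficit of a coordinate. A tuple is admissible exactly when
`∑ δⱼ ≤ d`, and the only admissible tuples with `α₁ ≤ q - d` are the `m + 1` tuples with deficit
vector `(d, 0, …, 0)`, `(d - 1, 0, …, 1, …, 0)` and `(d - 1, 0, …, 0)`. In lexicographic order
these come in this sequence, and before every other admissible tuple, since all the others have
`α₁ > q - d`. So the `r`-th admissible tuple is the `r`-th of them, and
`q^m - 1 - ∑ αⱼ q^(m-j) = ∑ δⱼ q^(m-j)` is read off its deficit vector.
-/

/-- `flq q m r` is `⌊q^(m-r)⌋`, i.e. `q^(m-r)` for `r ≤ m` and `0` for `r = m+1`. -/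
noncomputable def flq (q m r : ℕ) : ℕ := if r ≤ m then q ^ (m - r) else 0

open Finset

namespace HeijnenPellikaan

variable {q d m : ℕ}

def Admissible (q d : ℕ) {m : ℕ} (β : Fin m → ℕ) : Prop :=
  (∀ j, β j ≤ q - 1) ∧ m * (q - 1) - d ≤ ∑ j, β j

def lexPredecessors (q d : ℕ) {m : ℕ} (α : Fin m → ℕ) : Set (Fin m → ℕ) :=
  {β | (∀ j, β j ≤ q - 1) ∧ m * (q - 1) - d ≤ ∑ j, β j ∧ toLex β < toLex α}

lemma mem_lexPredecessors {α β : Fin m → ℕ} :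
    β ∈ lexPredecessors q d α ↔ Admissible q d β ∧ toLex β < toLex α :=
  and_assoc.symm

lemma lexPredecessors_finite (α : Fin m → ℕ) : (lexPredecessors q d α).Finite :=
  (Set.finite_Iic fun _ => q - 1).subset fun _ hβ => hβ.1

lemma sum_sub_add_sum {c : ℕ} {β : Fin m → ℕ} (hβ : ∀ j, β j ≤ c) :
    ∑ j, (c - β j) + ∑ j, β j = m * c := by
  rw [← sum_add_distrib, sum_congr rfl fun j _ => Nat.sub_add_cancel (hβ j)]
  simp

lemma admissible_iff_sum_sub_le {β : Fin m → ℕ} (hβ : ∀ j, β j ≤ q - 1) :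
    Admissible q d β ↔ ∑ j, (q - 1 - β j) ≤ d := by
  have := sum_sub_add_sum hβ
  simp only [Admissible, hβ, implies_true, true_and]
  omega

lemma sum_pred_mul_pow_rev (hq : 1 ≤ q) :
    ∑ j : Fin m, (q - 1) * q ^ (m - 1 - j) = q ^ m - 1 := by
  have hgeom := geom_sum_mul_add (q - 1) m
  rw [Nat.sub_add_cancel hq] at hgeom
  have hrev : ∑ j : Fin m, (q - 1) * q ^ (m - 1 - j) = ∑ j : Fin m, (q - 1) * q ^ (j : ℕ) := by
    rw [← Equiv.sum_comp Fin.revPerm]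
    refine sum_congr rfl fun j _ => ?_
    simp only [Fin.revPerm_apply, Fin.val_rev]
    congr 2
    omega
  rw [hrev, ← mul_sum, Fin.sum_univ_eq_sum_range (fun j => q ^ j), mul_comm]
  omega

/-- The deficit vector of the `(i + 1)`-th admissible tuple, indexed from `0`: `d - 1` at `0`,
plus `1` at `i` (nowhere if `i = m`). -/
def deficit (d i j : ℕ) : ℕ := (if j = 0 then d - 1 else 0) + (if j = i then 1 else 0)

def bottomTuple (q d : ℕ) {m : ℕ} (i : ℕ) : Fin m → ℕ := fun j => q - 1 - deficit d i j

lemma deficit_le (hd : 1 ≤ d) (i j : ℕ) : deficit d i j ≤ d := by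
  unfold deficit
  split_ifs <;> omega

lemma sum_deficit_mul (hm : 0 < m) (i : ℕ) (f : ℕ → ℕ) :
    ∑ j : Fin m, deficit d i j * f j = (d - 1) * f 0 + if i < m then f i else 0 := by
  rw [Fin.sum_univ_eq_sum_range (fun j => deficit d i j * f j)]
  simp [deficit, add_mul, ite_mul, sum_add_distrib, hm]

lemma admissible_bottomTuple (hm : 0 < m) (hd : 1 ≤ d) (hdq : d < q) (i : ℕ) :
    Admissible q d (bottomTuple q d i : Fin m → ℕ) := by
  rw [admissible_iff_sum_sub_le (β := bottomTuple q d i) fun j => Nat.sub_le _ _]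
  have hδ : ∀ j : Fin m, q - 1 - bottomTuple q d i j = deficit d i j := fun j => by
    have := deficit_le hd i j
    simp only [bottomTuple]
    omega
  have := sum_deficit_mul (d := d) hm i fun _ => 1
  simp only [mul_one] at this
  rw [sum_congr rfl fun j _ => hδ j, this]
  split_ifs <;> omega

lemma bottomTuple_lt_bottomTuple (hd : 1 ≤ d) (hdq : d < q) {i i' : ℕ} (hii' : i < i')
    (him : i < m) : toLex (bottomTuple q d i : Fin m → ℕ) < toLex (bottomTuple q d i') := by
  refine ⟨⟨i, him⟩, fun j hj => ?_, ?_⟩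
  · have hji : (j : ℕ) < i := hj
    simp [bottomTuple, deficit, hji.ne, (hji.trans hii').ne]
  · simp only [Pi.toLex_apply, bottomTuple, deficit, if_neg hii'.ne]
    split_ifs <;> omega

lemma strictMonoOn_bottomTuple (hd : 1 ≤ d) (hdq : d < q) :
    StrictMonoOn (fun i => toLex (bottomTuple q d i : Fin m → ℕ)) (Set.Iic m) :=
  fun _ _ _ hi' hii' => bottomTuple_lt_bottomTuple hd hdq hii' (hii'.trans_le hi')

lemma injOn_bottomTuple (hd : 1 ≤ d) (hdq : d < q) :
    Set.InjOn (bottomTuple q d : ℕ → Fin m → ℕ) (Set.Iic m) :=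
  fun _ hi _ hi' h => (strictMonoOn_bottomTuple hd hdq).injOn hi hi' (congrArg toLex h)

lemma bottomTuple_lt_of_sub_lt (hm : 0 < m) {β : Fin m → ℕ} (hβ : q - d < β ⟨0, hm⟩) (i : ℕ) :
    toLex (bottomTuple q d i) < toLex β := by
  refine ⟨⟨0, hm⟩, fun j hj => absurd hj (Nat.not_lt_zero _), ?_⟩
  simp only [Pi.toLex_apply, bottomTuple, deficit]
  split_ifs <;> omega

/- The partial sums over `{0, j}` and `{0, i, j}` leave room for at most one nonzero deficit
besides the first, and it must equal `1`. -/
lemma exists_eq_deficit (hm : 0 < m) {δ : Fin m → ℕ} (hsum : ∑ j, δ j ≤ d)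
    (h0 : d - 1 ≤ δ ⟨0, hm⟩) : ∃ i ≤ m, ∀ j : Fin m, δ j = deficit d i j := by
  set o : Fin m := ⟨0, hm⟩
  have ho : (o : ℕ) = 0 := rfl
  have hne : ∀ j : Fin m, j ≠ o → (j : ℕ) ≠ 0 := fun j hj h => hj (Fin.ext h)
  have hpart : ∀ s : Finset (Fin m), ∑ j ∈ s, δ j ≤ d :=
    fun s => (sum_le_sum_of_subset (subset_univ s)).trans hsum
  have hpair : ∀ j ≠ o, δ o + δ j ≤ d := fun j hj => by
    simpa [sum_pair hj.symm] using hpart {o, j}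
  by_cases hdo : δ o = d - 1
  · by_cases hsupp : ∃ i ≠ o, δ i ≠ 0
    · obtain ⟨i, hio, hi⟩ := hsupp
      refine ⟨i, i.isLt.le, fun j => ?_⟩
      have := hpair i hio
      rcases eq_or_ne j o with rfl | hjo
      · simp [deficit, ho, hdo, Ne.symm (hne i hio)]
      rcases eq_or_ne j i with rfl | hji
      · rw [deficit, if_neg (hne j hjo), if_pos rfl]
        omega
      · have := hpart {o, i, j}
        rw [sum_insert (by simp [hio.symm, hjo.symm]), sum_pair hji.symm] at this
        rw [deficit, if_neg (hne j hjo), if_neg (Fin.val_ne_of_ne hji)]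
        omega
    · push Not at hsupp
      refine ⟨m, le_rfl, fun j => ?_⟩
      rcases eq_or_ne j o with rfl | hjo
      · simp [deficit, ho, hdo, hm.ne]
      · simp [deficit, hne j hjo, j.isLt.ne, hsupp j hjo]
  · refine ⟨0, hm.le, fun j => ?_⟩
    rcases eq_or_ne j o with rfl | hjo
    · have := hpart {o}
      simp only [sum_singleton] at this
      simp only [deficit, ho, ↓reduceIte]
      omega
    · have := hpair j hjo
      rw [deficit, if_neg (hne j hjo), if_neg (hne j hjo)]
      omega

lemma exists_eq_bottomTuple (hm : 0 < m) (hdq : d < q) {β : Fin m → ℕ} (hβ : Admissible q d β)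
    (h0 : β ⟨0, hm⟩ ≤ q - d) : ∃ i ≤ m, β = bottomTuple q d i := by
  have hsum := (admissible_iff_sum_sub_le hβ.1).1 hβ
  obtain ⟨i, hi, hδ⟩ := exists_eq_deficit hm hsum (by omega)
  refine ⟨i, hi, funext fun j => ?_⟩
  have := hβ.1 j
  simp only [bottomTuple, ← hδ j]
  omega

lemma lexPredecessors_bottomTuple (hm : 0 < m) (hd : 1 ≤ d) (hdq : d < q) {i : ℕ} (hi : i ≤ m) :
    lexPredecessors q d (bottomTuple q d i : Fin m → ℕ) = bottomTuple q d '' Set.Iio i := by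
  have hmono := strictMonoOn_bottomTuple (m := m) hd hdq
  ext β
  rw [mem_lexPredecessors]
  constructor
  · rintro ⟨hβ, hlt⟩
    by_cases h0 : β ⟨0, hm⟩ ≤ q - d
    · obtain ⟨i', hi', rfl⟩ := exists_eq_bottomTuple hm hdq hβ h0
      exact ⟨i', (hmono.lt_iff_lt hi' hi).1 hlt, rfl⟩
    · exact absurd hlt (bottomTuple_lt_of_sub_lt hm (not_le.1 h0) i).asymm
  · rintro ⟨i', hi', rfl⟩
    exact ⟨admissible_bottomTuple hm hd hdq i', hmono (le_of_lt (hi'.trans_le hi)) hi hi'⟩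

lemma ncard_lexPredecessors_bottomTuple (hm : 0 < m) (hd : 1 ≤ d) (hdq : d < q) {i : ℕ}
    (hi : i ≤ m) : (lexPredecessors q d (bottomTuple q d i : Fin m → ℕ)).ncard = i := by
  have hsub : Set.Iio i ⊆ Set.Iic m := Set.Iio_subset_Iic_self.trans (Set.Iic_subset_Iic.2 hi)
  rw [lexPredecessors_bottomTuple hm hd hdq hi,
    ((injOn_bottomTuple hd hdq).mono hsub).ncard_image, Set.ncard_Iio_nat]

lemma exists_eq_bottomTuple_of_ncard_le (hm : 0 < m) (hd : 1 ≤ d) (hdq : d < q)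
    {α : Fin m → ℕ} (hα : Admissible q d α) (hcount : (lexPredecessors q d α).ncard ≤ m) :
    ∃ i ≤ m, α = bottomTuple q d i := by
  by_contra hne
  have h0 : q - d < α ⟨0, hm⟩ :=
    not_le.1 fun h0 => hne (exists_eq_bottomTuple hm hdq hα h0)
  have hsub : bottomTuple q d '' Set.Iic m ⊆ lexPredecessors q d α := by
    rintro _ ⟨i, -, rfl⟩
    exact mem_lexPredecessors.2
      ⟨admissible_bottomTuple hm hd hdq i, bottomTuple_lt_of_sub_lt hm h0 i⟩
  have := Set.ncard_le_ncard hsub (lexPredecessors_finite α)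
  rw [(injOn_bottomTuple hd hdq).ncard_image, Set.ncard_Iic_nat] at this
  omega

lemma pow_sub_one_add_sum_bottomTuple (hm : 0 < m) (hd : 1 ≤ d) (hdq : d < q) (i : ℕ) :
    q ^ m - (1 + ∑ j : Fin m, bottomTuple q d i j * q ^ (m - 1 - j))
      = (d - 1) * q ^ (m - 1) + flq q m (i + 1) := by
  have hsplit : ∑ j : Fin m, bottomTuple q d i j * q ^ (m - 1 - j)
      + ∑ j : Fin m, deficit d i j * q ^ (m - 1 - j) = q ^ m - 1 := by
    rw [← sum_pred_mul_pow_rev (by omega), ← sum_add_distrib]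
    refine sum_congr rfl fun j _ => ?_
    have := deficit_le hd i j
    rw [bottomTuple, ← add_mul, Nat.sub_add_cancel (by omega)]
  have hpos : 0 < q ^ m := pow_pos (by omega) m
  rw [sum_deficit_mul hm i fun j => q ^ (m - 1 - j), Nat.sub_zero] at hsplit
  simp only [flq, Nat.add_one_le_iff, Nat.sub_sub, add_comm 1 i] at hsplit ⊢
  omega

end HeijnenPellikaan

open HeijnenPellikaan

/-- Heijnen–Pellikaan quantity: for `1 ≤ d < q` and `1 ≤ r ≤ m+1`, if
`(α₁,…,α_m)` is the `r`-th tuple in ascending lexicographic order among `m`-tuples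
with entries in `{0,…,q-1}` and coordinate sum at least `m(q-1)-d`, then
`q^m - (1 + ∑ α_j q^(m-j)) = (d-1)q^(m-1) + ⌊q^(m-r)⌋`. -/
theorem Hr_simplifies (q d m r : ℕ) (hd : 1 ≤ d) (hdq : d < q) (hm : 1 ≤ m)
    (hr : 1 ≤ r) (hrm : r ≤ m + 1)
    (α : Fin m → ℕ)
    (hbd : ∀ j, α j ≤ q - 1)
    (hsum : m * (q - 1) - d ≤ ∑ j, α j)
    (hrth : Set.ncard {β : Fin m → ℕ | (∀ j, β j ≤ q - 1) ∧
        m * (q - 1) - d ≤ ∑ j, β j ∧ toLex β < toLex α} = r - 1) :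
    q ^ m - (1 + ∑ j : Fin m, α j * q ^ (m - 1 - (j : ℕ)))
      = (d - 1) * q ^ (m - 1) + flq q m r := by
  change (lexPredecessors q d α).ncard = r - 1 at hrth
  obtain ⟨i, hi, rfl⟩ :=
    exists_eq_bottomTuple_of_ncard_le hm hd hdq ⟨hbd, hsum⟩ (by omega)
  rw [ncard_lexPredecessors_bottomTuple hm hd hdq hi] at hrth
  obtain rfl : r = i + 1 := by omega
  exact pow_sub_one_add_sum_bottomTuple hm hd hdq i
end

section
/- Let $N$ be a finite set of cardinality $n$, and let $1 \le k \le n$. Suppose $\Lambda$ is a nonempty family of $r$ distinct $k$-element subsets of $N$ such that $|A \cap B| = k-1$ for all distinct $A, B \in \Lambda$. Then the cardinality of the intersection of all members of $\Lambda$ equals $k-1$ or $k-r+1$. -/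
/-!
Fix two members `A ≠ B`, so `|A ∩ B| = k - 1` and `|A ∪ B| = k + 1`. A member `C` missing a point
`x ∈ A ∩ B` meets `A` and `B` in `k - 1` points each, hence contains `(A ∪ B) \ {x}` and equals it.
So either every member contains `A ∩ B`, and the intersection is `A ∩ B`, or some member is such a
`(A ∪ B) \ {x₀}`; then every member lies in `A ∪ B` and is `A ∪ B` minus one point, distinct
members missing distinct points, so the intersection is `A ∪ B` minus `r` points.
-/

open Finset

namespace Finset

variable {α : Type*} [DecidableEq α]

theorem eq_erase_of_subset_of_card_le {C U : Finset α} {x : α} (hCU : C ⊆ U) (hx : x ∈ U \ C)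
    (hcard : #U ≤ #C + 1) : C = U.erase x := by
  rw [mem_sdiff] at hx
  refine eq_of_subset_of_card_le (subset_erase.2 ⟨hCU, hx.2⟩) ?_
  rw [card_erase_of_mem hx.1]
  omega

theorem card_inf'_add_card_eq {U : Finset α} {Λ : Finset (Finset α)} (hne : Λ.Nonempty)
    (hsub : ∀ C ∈ Λ, C ⊆ U) (hcard : ∀ C ∈ Λ, #U = #C + 1) :
    #(Λ.inf' hne id) + #Λ = #U := by
  have hmissing : ∀ C ∈ Λ, #(U \ C) = 1 := fun C hC => by
    rw [card_sdiff_of_subset (hsub C hC), hcard C hC]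
    omega
  have hcompl : U \ Λ.inf' hne id = Λ.biUnion (U \ ·) := by
    ext y
    simp only [mem_sdiff, mem_inf', id, mem_biUnion, not_forall, exists_prop]
    tauto
  have hdisj : (Λ : Set (Finset α)).PairwiseDisjoint (U \ ·) := by
    intro C hC D hD hCD
    refine disjoint_left.2 fun y hyC hyD => hCD ?_
    rw [eq_erase_of_subset_of_card_le (hsub C hC) hyC (hcard C hC).le,
      eq_erase_of_subset_of_card_le (hsub D hD) hyD (hcard D hD).le]
  obtain ⟨C, hC⟩ := hne
  have hinfU : Λ.inf' ⟨C, hC⟩ id ⊆ U := (inf'_le id hC).trans (hsub C hC)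
  rw [← card_sdiff_add_card_eq_card hinfU, hcompl, card_biUnion hdisj,
    sum_congr rfl hmissing, sum_const, smul_eq_mul, mul_one, add_comm]

end Finset

def IsCloseFamily {α : Type*} [DecidableEq α] (k : ℕ) (Λ : Finset (Finset α)) : Prop :=
  (∀ A ∈ Λ, #A = k) ∧ ∀ A ∈ Λ, ∀ B ∈ Λ, A ≠ B → #(A ∩ B) = k - 1

namespace IsCloseFamily

variable {α : Type*} [DecidableEq α] {k : ℕ} {Λ : Finset (Finset α)} {A B C : Finset α} {x : α}

theorem erase_subset (hΛ : IsCloseFamily k Λ) (hA : A ∈ Λ) (hC : C ∈ Λ) (hxA : x ∈ A)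
    (hxC : x ∉ C) : A.erase x ⊆ C := by
  have hAC : A ≠ C := by rintro rfl; exact hxC hxA
  have hinter : #A ≤ #(A ∩ C) + 1 := by
    rw [hΛ.1 A hA, hΛ.2 A hA C hC hAC]
    omega
  rw [← eq_erase_of_subset_of_card_le inter_subset_left (by simp [hxA, hxC]) hinter]
  exact inter_subset_right

theorem card_union (hΛ : IsCloseFamily k Λ) (hA : A ∈ Λ) (hB : B ∈ Λ) (hAB : A ≠ B) :
    #(A ∪ B) = k + 1 := by
  have hk : k ≠ 0 := by
    rintro rfl
    exact hAB (by rw [card_eq_zero.1 (hΛ.1 A hA), card_eq_zero.1 (hΛ.1 B hB)])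
  have := card_union_add_card_inter A B
  rw [hΛ.1 A hA, hΛ.1 B hB, hΛ.2 A hA B hB hAB] at this
  omega

theorem eq_erase_union (hΛ : IsCloseFamily k Λ) (hA : A ∈ Λ) (hB : B ∈ Λ) (hAB : A ≠ B)
    (hC : C ∈ Λ) (hx : x ∈ A ∩ B) (hxC : x ∉ C) : C = (A ∪ B).erase x := by
  rw [mem_inter] at hx
  have hsub : (A ∪ B).erase x ⊆ C := by
    rw [erase_union_distrib]
    exact union_subset (hΛ.erase_subset hA hC hx.1 hxC) (hΛ.erase_subset hB hC hx.2 hxC)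
  refine (eq_of_subset_of_card_le hsub ?_).symm
  rw [card_erase_of_mem (mem_union_left B hx.1), hΛ.card_union hA hB hAB, hΛ.1 C hC]
  omega

theorem inter_subset_or_subset_union (hΛ : IsCloseFamily k Λ) (hA : A ∈ Λ) (hB : B ∈ Λ)
    (hAB : A ≠ B) : (∀ C ∈ Λ, A ∩ B ⊆ C) ∨ ∀ C ∈ Λ, C ⊆ A ∪ B := by
  refine or_iff_not_imp_left.2 fun hnot C hC => ?_
  have subset_of_not_subset : ∀ D ∈ Λ, ¬A ∩ B ⊆ D → D ⊆ A ∪ B := fun D hD hD' => by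
    obtain ⟨x, hx, hxD⟩ := not_subset.1 hD'
    rw [hΛ.eq_erase_union hA hB hAB hD hx hxD]
    exact Finset.erase_subset x _
  push Not at hnot
  obtain ⟨C₀, hC₀, hC₀'⟩ := hnot
  by_cases hIC : A ∩ B ⊆ C
  · obtain ⟨x₀, hx₀, hx₀C₀⟩ := not_subset.1 hC₀'
    rw [← insert_erase (hIC hx₀)]
    exact insert_subset (inter_subset_union hx₀)
      ((hΛ.erase_subset hC hC₀ (hIC hx₀) hx₀C₀).trans (subset_of_not_subset C₀ hC₀ hC₀'))
  · exact subset_of_not_subset C hC hIC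

end IsCloseFamily

theorem close_family_intersection_general {α : Type} [DecidableEq α] (k r : ℕ)
    (Λ : Finset (Finset α)) (hΛk : ∀ A ∈ Λ, A.card = k)
    (hr : Λ.card = r) (hne : Λ.Nonempty)
    (hclose : ∀ A ∈ Λ, ∀ B ∈ Λ, A ≠ B → (A ∩ B).card = k - 1) :
    (Λ.inf' hne id).card = k - 1 ∨ (Λ.inf' hne id).card = k + 1 - r := by
  have hΛ : IsCloseFamily k Λ := ⟨hΛk, hclose⟩
  obtain ⟨A, rfl⟩ | ⟨A, hA, B, hB, hAB⟩ := hne.exists_eq_singleton_or_nontrivial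
  · right
    rw [inf'_singleton, id, hΛk A (mem_singleton_self A), ← hr, card_singleton]
    omega
  rcases hΛ.inter_subset_or_subset_union hA hB hAB with hkernel | hsub
  · left
    have hinf : Λ.inf' hne id = A ∩ B :=
      (subset_inter (inf'_le id hA) (inf'_le id hB)).antisymm (le_inf' hne id hkernel)
    rw [hinf, hclose A hA B hB hAB]
  · right
    have hU := hΛ.card_union hA hB hAB
    have := card_inf'_add_card_eq hne hsub fun C hC => by rw [hU, hΛk C hC]
    omega

/-- If `Λ` is a nonempty close family of `r` distinct `k`-element subsets of a finite
set `N` of cardinality `n` (any two distinct members meeting in exactly `k-1` elements,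
`1 ≤ k ≤ n`), then the intersection of all members of `Λ` has `k-1` or `k-r+1`
elements. -/
theorem close_family_intersection {α : Type} [DecidableEq α] (n k r : ℕ)
    (N : Finset α) (hN : N.card = n) (hk1 : 1 ≤ k) (hkn : k ≤ n)
    (Λ : Finset (Finset α)) (hΛN : ∀ A ∈ Λ, A ⊆ N) (hΛk : ∀ A ∈ Λ, A.card = k)
    (hr : Λ.card = r) (hne : Λ.Nonempty)
    (hclose : ∀ A ∈ Λ, ∀ B ∈ Λ, A ≠ B → (A ∩ B).card = k - 1) :
    (Λ.inf' hne id).card = k - 1 ∨ (Λ.inf' hne id).card = k + 1 - r :=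
  close_family_intersection_general k r Λ hΛk hr hne hclose
end

section
/- Let $N$ be a finite set with $n$ elements, $1 < k < n$, and let $\Lambda$ be a family of $r$ distinct $k$-element subsets of $N$ with $|A \cap B| = k-1$ for all distinct $A, B \in \Lambda$. If the intersection of all members of $\Lambda$ is empty, then $r = k+1$ and there exist distinct elements $\nu_1, \dots, \nu_r \in N$ such that $\Lambda = \{ \{\nu_1, \dots, \nu_r\} \setminus \{\nu_i\} : i = 1, \dots, r \}$. -/
/-- Structure of close families with empty intersection: if `1 < k < n` and `Λ` is a
family of `r` distinct `k`-subsets of an `n`-set `N`, any two distinct members meeting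
in exactly `k-1` elements, and the intersection of all members of `Λ` is empty, then
`r = k+1` and there are distinct `ν₁,…,ν_r ∈ N` with
`Λ = { {ν₁,…,ν_r} \ {ν_i} : i = 1,…,r }`. -/
theorem close_family_structure {α : Type} [DecidableEq α] (n k r : ℕ)
    (N : Finset α) (hN : N.card = n) (hk1 : 1 < k) (hkn : k < n)
    (Λ : Finset (Finset α)) (hΛN : ∀ A ∈ Λ, A ⊆ N) (hΛk : ∀ A ∈ Λ, A.card = k)
    (hr : Λ.card = r) (hne : Λ.Nonempty)
    (hclose : ∀ A ∈ Λ, ∀ B ∈ Λ, A ≠ B → (A ∩ B).card = k - 1)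
    (hempty : Λ.inf' hne id = ∅) :
    r = k + 1 ∧ ∃ ν : Fin r ↪ α, (∀ i, ν i ∈ N) ∧
      Λ = Finset.image (fun i => (Finset.univ.image ν).erase (ν i)) Finset.univ := by
  classical
  have hk0 : 0 < k := by omega
  -- every point is missed by some member
  have hmiss : ∀ x : α, ∃ C ∈ Λ, x ∉ C := by
    intro x
    by_contra h
    push_neg at h
    have hx : ({x} : Finset α) ≤ Λ.inf' hne id := by
      apply Finset.le_inf'
      intro C hC
      simpa using h C hC
    rw [hempty] at hx
    simpa using hx
  -- Λ has at least two members
  have h2 : 1 < Λ.card := by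
    by_contra h
    push_neg at h
    obtain ⟨A, hA⟩ := id hne
    have hsub : A ≤ Λ.inf' hne id := by
      apply Finset.le_inf'
      intro C hC
      have : C = A := by
        have h1 : Λ.card = 1 := le_antisymm h (Finset.one_le_card.mpr hne)
        obtain ⟨B, hB⟩ := Finset.card_eq_one.mp h1
        rw [hB] at hC hA
        simp at hC hA; rw [hC, hA]
      simp [this]
    rw [hempty] at hsub
    have : A.card = 0 := Nat.le_zero.mp (by simpa using Finset.card_le_card hsub)
    rw [hΛk A hA] at this; omega
  obtain ⟨A, hA, B, hB, hAB⟩ := Finset.one_lt_card.mp h2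
  set S := A ∪ B with hSdef
  set D := A ∩ B with hDdef
  have hAk := hΛk A hA
  have hBk := hΛk B hB
  have hD : D.card = k - 1 := hclose A hA B hB hAB
  have hS : S.card = k + 1 := by
    have := Finset.card_union_add_card_inter A B
    rw [hAk, hBk, ← hDdef, hD, ← hSdef] at this
    omega
  -- difference of two distinct members is a singleton
  have L1 : ∀ C ∈ Λ, ∀ C' ∈ Λ, C ≠ C' → (C \ C').card = 1 := by
    intro C hC C' hC' hne'
    have := Finset.card_sdiff_add_card_inter C C'
    rw [hΛk C hC, hclose C hC C' hC' hne'] at this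
    omega
  -- dichotomy: a member not inside S contains D
  have stepA : ∀ C ∈ Λ, ¬ C ⊆ S → D ⊆ C := by
    intro C hC hCS
    obtain ⟨c, hcC, hcS⟩ := Finset.not_subset.mp hCS
    have hCA : C ≠ A := by rintro rfl; exact hcS (Finset.mem_union_left _ hcC)
    have hCB : C ≠ B := by rintro rfl; exact hcS (Finset.mem_union_right _ hcC)
    have hCAc : C \ A = {c} := by
      obtain ⟨x, hx⟩ := Finset.card_eq_one.mp (L1 C hC A hA hCA)
      have : c ∈ C \ A := Finset.mem_sdiff.mpr ⟨hcC, fun h => hcS (Finset.mem_union_left _ h)⟩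
      rw [hx] at this ⊢
      simp at this; rw [this]
    have hCBc : C \ B = {c} := by
      obtain ⟨x, hx⟩ := Finset.card_eq_one.mp (L1 C hC B hB hCB)
      have : c ∈ C \ B := Finset.mem_sdiff.mpr ⟨hcC, fun h => hcS (Finset.mem_union_right _ h)⟩
      rw [hx] at this ⊢
      simp at this; rw [this]
    have hCACB : C ∩ A = C ∩ B := by
      rw [← Finset.sdiff_sdiff_self_left C A, ← Finset.sdiff_sdiff_self_left C B, hCAc, hCBc]
    -- A ∩ C ⊆ A ∩ B, equal cards
    have hsub : A ∩ C ⊆ A ∩ B := by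
      intro t ht
      have ht' : t ∈ C ∩ A := by rw [Finset.inter_comm]; exact ht
      rw [hCACB] at ht'
      exact Finset.mem_inter.mpr ⟨(Finset.mem_inter.mp ht).1, (Finset.mem_inter.mp ht').2⟩
    have hcards : (A ∩ B).card ≤ (A ∩ C).card := by
      rw [hclose A hA B hB hAB, hclose A hA C hC (Ne.symm hCA)]
    have heq : A ∩ C = A ∩ B := Finset.eq_of_subset_of_card_le hsub hcards
    rw [hDdef, ← heq]
    exact Finset.inter_subset_right
  -- get a member inside S other than A, B
  have hDne : D.Nonempty := by
    rw [← Finset.card_pos, hD]; omega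
  obtain ⟨d, hd⟩ := hDne
  obtain ⟨C₀, hC₀, hdC₀⟩ := hmiss d
  have hDC₀ : ¬ D ⊆ C₀ := fun h => hdC₀ (h hd)
  have hC₀S : C₀ ⊆ S := by
    by_contra h
    exact hDC₀ (stepA C₀ hC₀ h)
  -- every member is inside S
  have stepC : ∀ E ∈ Λ, E ⊆ S := by
    intro E hE
    by_contra hES
    have hDE : D ⊆ E := stepA E hE hES
    have hEC₀ : E ≠ C₀ := by rintro rfl; exact hDC₀ hDE
    -- E \ D is a singleton outside S
    have hEDcard : (E \ D).card = 1 := by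
      rw [Finset.card_sdiff_of_subset hDE, hΛk E hE, hD]; omega
    obtain ⟨e, he⟩ := Finset.card_eq_one.mp hEDcard
    have heE : e ∈ E := by
      have : e ∈ E \ D := by rw [he]; simp
      exact (Finset.mem_sdiff.mp this).1
    have heS : e ∉ S := by
      intro heS
      obtain ⟨e', he'E, he'S⟩ := Finset.not_subset.mp hES
      have : e' ∈ E \ D := Finset.mem_sdiff.mpr ⟨he'E, fun h => he'S (Finset.mem_union_left _ ((Finset.inter_subset_left) h))⟩
      rw [he] at this; simp at this; rw [← this] at heS; exact he'S heS
    -- E ∩ C₀ ⊆ D.erase d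
    have hsub : E ∩ C₀ ⊆ D.erase d := by
      intro t ht
      obtain ⟨htE, htC₀⟩ := Finset.mem_inter.mp ht
      have htS : t ∈ S := hC₀S htC₀
      have htD : t ∈ D := by
        by_cases h : t ∈ D
        · exact h
        · exfalso
          have : t ∈ E \ D := Finset.mem_sdiff.mpr ⟨htE, h⟩
          rw [he] at this; simp at this; rw [this] at htS; exact heS htS
      refine Finset.mem_erase.mpr ⟨?_, htD⟩
      rintro rfl; exact hdC₀ htC₀
    have h1 : (E ∩ C₀).card = k - 1 := hclose E hE C₀ hC₀ hEC₀
    have h2' : (D.erase d).card = k - 2 := by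
      rw [Finset.card_erase_of_mem hd, hD]; omega
    have := Finset.card_le_card hsub
    omega
  -- every member is S minus a point
  have stepD : ∀ E ∈ Λ, ∃ x ∈ S, E = S.erase x := by
    intro E hE
    have hES := stepC E hE
    have hcard : (S \ E).card = 1 := by
      rw [Finset.card_sdiff_of_subset hES, hS, hΛk E hE]; omega
    obtain ⟨x, hx⟩ := Finset.card_eq_one.mp hcard
    refine ⟨x, ?_, ?_⟩
    · have : x ∈ S \ E := by rw [hx]; simp
      exact (Finset.mem_sdiff.mp this).1
    · have : S \ (S \ E) = E := by
        rw [Finset.sdiff_sdiff_self_left]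
        exact Finset.inter_eq_right.mpr hES
      rw [← this, hx, Finset.erase_eq]
  -- Λ equals the set of all S.erase x
  have stepE : Λ = S.image (fun x => S.erase x) := by
    apply Finset.Subset.antisymm
    · intro E hE
      obtain ⟨x, hx, hEx⟩ := stepD E hE
      exact Finset.mem_image.mpr ⟨x, hx, hEx.symm⟩
    · intro E hE
      obtain ⟨x, hx, hEx⟩ := Finset.mem_image.mp hE
      obtain ⟨C, hC, hxC⟩ := hmiss x
      obtain ⟨y, hy, hCy⟩ := stepD C hC
      have hxy : x = y := by
        by_contra h
        exact hxC (hCy ▸ Finset.mem_erase.mpr ⟨h, hx⟩)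
      rw [← hEx, hxy, ← hCy]; exact hC
  have heraseInj : Set.InjOn (fun x => S.erase x) S := by
    intro x hx y hy hxy
    by_contra h
    simp only at hxy
    have hx' : x ∈ S.erase y := Finset.mem_erase.mpr ⟨h, hx⟩
    rw [← hxy] at hx'
    exact (Finset.mem_erase.mp hx').1 rfl
  have hrcard : r = k + 1 := by
    rw [← hr, stepE, Finset.card_image_of_injOn heraseInj, hS]
  refine ⟨hrcard, ?_⟩
  -- build the enumeration of S
  have hrS : r = S.card := by rw [hS, hrcard]
  let g : Fin r → α := fun i => (S.equivFin.symm (Fin.cast hrS i) : α)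
  have hgS : ∀ i, g i ∈ S := fun i => (S.equivFin.symm (Fin.cast hrS i)).2
  have hginj : Function.Injective g := by
    intro i j hij
    have := Subtype.ext hij
    have := S.equivFin.symm.injective this
    exact Fin.cast_injective hrS this
  refine ⟨⟨g, hginj⟩, ?_, ?_⟩
  · intro i
    have := hgS i
    rw [hSdef] at this
    rcases Finset.mem_union.mp this with h | h
    · exact hΛN A hA h
    · exact hΛN B hB h
  · have himg : Finset.univ.image (⟨g, hginj⟩ : Fin r ↪ α) = S := by
      apply Finset.Subset.antisymm
      · intro x hx
        obtain ⟨i, _, hi⟩ := Finset.mem_image.mp hx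
        exact hi ▸ hgS i
      · intro x hx
        refine Finset.mem_image.mpr ⟨Fin.cast hrS.symm (S.equivFin ⟨x, hx⟩), Finset.mem_univ _, ?_⟩
        simp [g]
    rw [stepE]
    simp only [Function.Embedding.coeFn_mk] at himg ⊢
    rw [himg]
    apply Finset.Subset.antisymm
    · intro E hE
      obtain ⟨x, hx, hEx⟩ := Finset.mem_image.mp hE
      have : ∃ i : Fin r, g i = x := by
        refine ⟨Fin.cast hrS.symm (S.equivFin ⟨x, hx⟩), ?_⟩
        simp [g]
      obtain ⟨i, hi⟩ := this
      exact Finset.mem_image.mpr ⟨i, Finset.mem_univ _, by rw [hi, hEx]⟩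
    · intro E hE
      obtain ⟨i, _, hi⟩ := Finset.mem_image.mp hE
      exact Finset.mem_image.mpr ⟨g i, hgS i, hi⟩
end

section
/- Let $k \ge 2$ and let $G_1, \dots, G_r$ be linearly independent homogeneous polynomials of degree $k$ in $\mathbb{F}_q[x_0,\dots,x_m]$ such that $\deg \gcd(G_i, G_j) = k-1$ for all $i \ne j$ and $\gcd(G_1, \dots, G_r) = 1$. Then no $G_i$ has an irreducible factor of degree $\ge 2$, and no $G_i$ is divisible by the square of a linear form; consequently each $G_i$ is a product of $k$ pairwise non-proportional homogeneous linear polynomials. -/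
/-!
Write `Gᵢ = D * L` with `D` a common factor of `Gᵢ` and `Gⱼ` of degree `k - 1`, so that `L` has
degree at most one. A prime factor of `Gᵢ` of degree at least two, or a linear form whose square
divides `Gᵢ`, cannot be absorbed by `L`, so it divides `D` and hence every `Gⱼ`, contradicting
coprimality. Hence the irreducible factors of `Gᵢ` are linear forms (factors of homogeneous
polynomials are homogeneous), `k` of them by degree, and two proportional ones would give a
square factor.
-/

open MvPolynomial

theorem UniqueFactorizationMonoid.exists_fin_prod_irreducible_eq {α : Type*}
    [CommMonoidWithZero α] [UniqueFactorizationMonoid α] {a : α} (ha : a ≠ 0)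
    (hu : ¬IsUnit a) : ∃ n, ∃ H : Fin n → α, (∀ t, Irreducible (H t)) ∧ ∏ t, H t = a := by
  obtain ⟨u, hu'⟩ := factors_prod ha
  obtain ⟨Q, hQ⟩ := exists_mem_factors ha hu
  obtain ⟨s, hs⟩ := Multiset.exists_cons_of_mem hQ
  let l := s.toList
  refine ⟨l.length + 1, Fin.cons (Q * u) fun t => l[t.1], fun t => ?_, ?_⟩
  · refine Fin.cases ((irreducible_mul_units u).mpr (irreducible_of_factor Q hQ)) (fun t => ?_) t
    refine irreducible_of_factor (a := a) _ ?_
    rw [hs]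
    exact Multiset.mem_cons_of_mem (Multiset.mem_toList.mp (List.getElem_mem _))
  · rw [Fin.prod_univ_succ, Fin.cons_zero]
    simp only [Fin.cons_succ]
    rw [Fin.prod_univ_getElem, Multiset.prod_toList, ← hu', hs, Multiset.prod_cons]
    exact mul_right_comm _ _ _

theorem Finset.mul_dvd_prod_of_ne {ι M : Type*} [CommMonoid M] [Fintype ι] (f : ι → M)
    {s t : ι} (hst : s ≠ t) : f s * f t ∣ ∏ i, f i := by
  classical
  rw [← Finset.prod_pair hst]
  exact Finset.prod_dvd_prod_of_subset _ _ _ (Finset.subset_univ _)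

namespace MvPolynomial

section Grading

variable {σ R : Type*} [CommRing R]

/-- `∑ₙ homogeneousComponent n p • Tⁿ`: substituting `X i ↦ X i • T` records the grading in the
variable `T`, where degrees and trailing degrees are additive over a domain. -/
noncomputable def gradingPolynomial : MvPolynomial σ R →ₐ[R] Polynomial (MvPolynomial σ R) :=
  aeval fun i => Polynomial.C (X i) * Polynomial.X

theorem gradingPolynomial_monomial (d : σ →₀ ℕ) (c : R) :
    gradingPolynomial (monomial d c) = Polynomial.monomial d.degree (monomial d c) := by
  rw [gradingPolynomial, aeval_monomial, Finsupp.prod, monomial_eq, Finsupp.prod, Finsupp.degree,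
    ← Polynomial.C_mul_X_pow_eq_monomial]
  simp only [mul_pow, Finset.prod_mul_distrib, ← Polynomial.C_pow, ← map_prod,
    Finset.prod_pow_eq_pow_sum]
  rw [Polynomial.algebraMap_apply, algebraMap_eq, ← mul_assoc, ← Polynomial.C_mul]
  rfl

theorem coeff_gradingPolynomial (p : MvPolynomial σ R) (n : ℕ) :
    (gradingPolynomial p).coeff n = homogeneousComponent n p := by
  induction p using MvPolynomial.induction_on' with
  | monomial d c =>
    rw [gradingPolynomial_monomial, Polynomial.coeff_monomial,
      homogeneousComponent_of_mem (isHomogeneous_monomial c rfl)]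
    grind
  | add p q hp hq => rw [map_add, Polynomial.coeff_add, hp, hq, map_add]

theorem gradingPolynomial_ne_zero {p : MvPolynomial σ R} (hp : p ≠ 0) :
    gradingPolynomial p ≠ 0 := fun h => hp <| by
  rw [← sum_homogeneousComponent p]
  exact Finset.sum_eq_zero fun n _ => by rw [← coeff_gradingPolynomial, h, Polynomial.coeff_zero]

theorem IsHomogeneous.gradingPolynomial_eq {p : MvPolynomial σ R} {n : ℕ}
    (hp : p.IsHomogeneous n) : gradingPolynomial p = Polynomial.monomial n p := by
  ext1 d
  rw [coeff_gradingPolynomial, homogeneousComponent_of_mem hp, Polynomial.coeff_monomial]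
  grind

theorem isHomogeneous_natDegree_gradingPolynomial {p : MvPolynomial σ R}
    (h : (gradingPolynomial p).natTrailingDegree = (gradingPolynomial p).natDegree) :
    p.IsHomogeneous (gradingPolynomial p).natDegree := by
  nth_rw 1 [← sum_homogeneousComponent p]
  apply IsHomogeneous.sum
  intro n _
  obtain rfl | hn := eq_or_ne n (gradingPolynomial p).natDegree
  · exact homogeneousComponent_isHomogeneous _ _
  rw [← coeff_gradingPolynomial]
  rcases hn.lt_or_gt with hlt | hgt
  · rw [Polynomial.coeff_eq_zero_of_lt_natTrailingDegree (h ▸ hlt)]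
    exact isHomogeneous_zero _ _ _
  · rw [Polynomial.coeff_eq_zero_of_natDegree_lt hgt]
    exact isHomogeneous_zero _ _ _

theorem IsHomogeneous.of_dvd [IsDomain R] {f a : MvPolynomial σ R} {n : ℕ}
    (hf : f.IsHomogeneous n) (hf0 : f ≠ 0) (ha : a ∣ f) : a.IsHomogeneous a.totalDegree := by
  obtain ⟨b, rfl⟩ := ha
  have ha0 : a ≠ 0 := left_ne_zero_of_mul hf0
  have hA := gradingPolynomial_ne_zero ha0
  have hB := gradingPolynomial_ne_zero (right_ne_zero_of_mul hf0)
  have hAB := hf.gradingPolynomial_eq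
  have hdeg := congrArg Polynomial.natDegree hAB
  have htrail := congrArg Polynomial.natTrailingDegree hAB
  rw [map_mul, Polynomial.natDegree_mul hA hB, Polynomial.natDegree_monomial_eq n hf0] at hdeg
  rw [map_mul, Polynomial.natTrailingDegree_mul hA hB, Polynomial.natTrailingDegree_monomial hf0]
    at htrail
  have hAle := (gradingPolynomial a).natTrailingDegree_le_natDegree
  have hBle := (gradingPolynomial b).natTrailingDegree_le_natDegree
  have hhom := isHomogeneous_natDegree_gradingPolynomial (p := a) (by omega)
  rwa [hhom.totalDegree ha0]

end Grading

section Domain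

variable {σ R : Type*} [CommRing R] [IsDomain R]

theorem totalDegree_pow_of_isDomain (p : MvPolynomial σ R) (n : ℕ) :
    (p ^ n).totalDegree = n * p.totalDegree := by
  obtain rfl | hp := eq_or_ne p 0
  · cases n <;> simp
  induction n with
  | zero => simp
  | succ n ih =>
    rw [pow_succ, totalDegree_mul_of_isDomain (pow_ne_zero n hp) hp, ih]
    ring

theorem totalDegree_le_one_of_mul_eq {f d l : MvPolynomial σ R} {n : ℕ}
    (hf : f.IsHomogeneous n) (hf0 : f ≠ 0) (hd : d.IsHomogeneous (n - 1)) (h : d * l = f) :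
    l.totalDegree ≤ 1 := by
  subst h
  have hd0 := left_ne_zero_of_mul hf0
  have := hf.totalDegree hf0
  rw [totalDegree_mul_of_isDomain hd0 (right_ne_zero_of_mul hf0), hd.totalDegree hd0] at this
  omega

theorem _root_.Prime.dvd_of_pow_dvd_mul_of_totalDegree_lt {Q d l : MvPolynomial σ R} {e : ℕ}
    (hQ : Prime Q) (h : Q ^ e ∣ d * l) (hl : l ≠ 0) (hlt : l.totalDegree < e * Q.totalDegree) :
    Q ∣ d := by
  by_contra hQd
  have := totalDegree_le_of_dvd_of_isDomain (hQ.pow_dvd_of_dvd_mul_left e hQd h) hl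
  rw [totalDegree_pow_of_isDomain] at this
  omega

theorem _root_.Prime.dvd_of_pow_dvd_of_dvd_of_isHomogeneous {Q f g d : MvPolynomial σ R}
    {n e : ℕ} (hQ : Prime Q) (he : 2 ≤ e * Q.totalDegree) (hQf : Q ^ e ∣ f)
    (hf : f.IsHomogeneous n) (hf0 : f ≠ 0) (hd : d.IsHomogeneous (n - 1)) (hdf : d ∣ f)
    (hdg : d ∣ g) : Q ∣ g := by
  obtain ⟨l, rfl⟩ := hdf
  have hl := totalDegree_le_one_of_mul_eq hf hf0 hd rfl
  exact (hQ.dvd_of_pow_dvd_mul_of_totalDegree_lt hQf (right_ne_zero_of_mul hf0) (by omega)).trans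
    hdg

theorem _root_.Prime.not_pow_dvd_of_pairwise_common_factor {Q : MvPolynomial σ R}
    (hQ : Prime Q) {e : ℕ} (he : 2 ≤ e * Q.totalDegree) {ι : Type*} {G : ι → MvPolynomial σ R}
    {k : ℕ} (hG0 : ∀ i, G i ≠ 0) (hhom : ∀ i, (G i).IsHomogeneous k)
    (hgcd : ∀ i j, i ≠ j → ∃ D : MvPolynomial σ R,
      D.IsHomogeneous (k - 1) ∧ D ∣ G i ∧ D ∣ G j)
    (hcop : ∀ E, (∀ i, E ∣ G i) → IsUnit E) (i : ι) : ¬Q ^ e ∣ G i := by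
  intro hQi
  refine hQ.not_isUnit (hcop Q fun j => ?_)
  obtain rfl | hij := eq_or_ne i j
  · exact (dvd_pow_self Q (by rintro rfl; omega)).trans hQi
  · obtain ⟨D, hD, hDi, hDj⟩ := hgcd i j hij
    exact hQ.dvd_of_pow_dvd_of_dvd_of_isHomogeneous he hQi (hhom i) (hG0 i) hD hDi hDj

end Domain

section Field

variable {σ K : Type*} [Field K]

theorem isUnit_of_totalDegree_eq_zero {p : MvPolynomial σ K} (hp : p ≠ 0)
    (h : p.totalDegree = 0) : IsUnit p := by
  rw [totalDegree_eq_zero_iff_eq_C] at h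
  rw [h] at hp ⊢
  exact (isUnit_iff_ne_zero.mpr fun h0 => hp (by rw [h0, map_zero])).map C

theorem irreducible_of_isHomogeneous_one {p : MvPolynomial σ K} (hp : p.IsHomogeneous 1)
    (hp0 : p ≠ 0) : Irreducible p := by
  refine irreducible_of_totalDegree_eq_one (hp.totalDegree hp0) fun x hx => ?_
  refine isUnit_iff_ne_zero.mpr ?_
  rintro rfl
  exact hp0 (ext _ _ fun d => zero_dvd_iff.mp (hx d))

theorem IsHomogeneous.isHomogeneous_one_of_irreducible_dvd {f Q : MvPolynomial σ K} {n : ℕ}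
    (hf : f.IsHomogeneous n) (hf0 : f ≠ 0) (hQ : Irreducible Q) (hQf : Q ∣ f)
    (hdeg : Q.totalDegree ≤ 1) : Q.IsHomogeneous 1 := by
  have hpos : Q.totalDegree ≠ 0 := fun h =>
    hQ.not_isUnit (isUnit_of_totalDegree_eq_zero hQ.ne_zero h)
  have := hf.of_dvd hf0 hQf
  rwa [show Q.totalDegree = 1 by omega] at this

theorem IsHomogeneous.exists_eq_prod_of_totalDegree_le_one {f : MvPolynomial σ K} {k : ℕ}
    (hf : f.IsHomogeneous k) (hf0 : f ≠ 0) (hk : k ≠ 0)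
    (hlin : ∀ Q, Irreducible Q → Q ∣ f → Q.totalDegree ≤ 1) :
    ∃ H : Fin k → MvPolynomial σ K, (∀ t, (H t).IsHomogeneous 1 ∧ H t ≠ 0) ∧ f = ∏ t, H t := by
  have hfu : ¬IsUnit f := fun hu => hk <| by
    rw [← hf.totalDegree hf0, (isUnit_iff_totalDegree_of_isReduced.mp hu).2]
  obtain ⟨n, H, hirr, hprod⟩ := UniqueFactorizationMonoid.exists_fin_prod_irreducible_eq hf0 hfu
  have hH t : (H t).IsHomogeneous 1 := by
    have hdvd : H t ∣ f := hprod ▸ Finset.dvd_prod_of_mem H (Finset.mem_univ t)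
    exact hf.isHomogeneous_one_of_irreducible_dvd hf0 (hirr t) hdvd (hlin _ (hirr t) hdvd)
  obtain rfl : n = k := by
    have := IsHomogeneous.prod Finset.univ H (fun _ => 1) fun t _ => hH t
    simp only [Finset.sum_const, Finset.card_univ, Fintype.card_fin, smul_eq_mul, mul_one,
      hprod] at this
    exact this.inj_right hf hf0
  exact ⟨H, fun t => ⟨hH t, (hirr t).ne_zero⟩, hprod.symm⟩

end Field

end MvPolynomial

theorem coprime_close_family_factors_general (k m r : ℕ) {K : Type} [Field K]
    (hk : 2 ≤ k)
    (G : Fin r → MvPolynomial (Fin (m + 1)) K)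
    (hli : LinearIndependent K G) (hhom : ∀ i, (G i).IsHomogeneous k)
    (hgcd : ∀ i j, i ≠ j → ∃ D : MvPolynomial (Fin (m + 1)) K,
      D.IsHomogeneous (k - 1) ∧ D ∣ G i ∧ D ∣ G j ∧
      ∀ E : MvPolynomial (Fin (m + 1)) K, E ∣ G i → E ∣ G j → E ∣ D)
    (hcop : ∀ E : MvPolynomial (Fin (m + 1)) K, (∀ i, E ∣ G i) → IsUnit E) :
    (∀ i, ∀ Q : MvPolynomial (Fin (m + 1)) K, Irreducible Q → Q ∣ G i →
      Q.totalDegree ≤ 1) ∧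
    (∀ i, ∀ H : MvPolynomial (Fin (m + 1)) K, H.IsHomogeneous 1 → H ≠ 0 →
      ¬ (H ^ 2 ∣ G i)) ∧
    (∀ i, ∃ H : Fin k → MvPolynomial (Fin (m + 1)) K,
      (∀ t, (H t).IsHomogeneous 1 ∧ H t ≠ 0) ∧
      (∀ s t, s ≠ t → ∀ c : K, H s ≠ C c * H t) ∧
      G i = ∏ t, H t) := by
  have hG0 : ∀ i, G i ≠ 0 := hli.ne_zero
  have not_dvd {Q : MvPolynomial (Fin (m + 1)) K} (hQ : Prime Q) {e : ℕ}
      (he : 2 ≤ e * Q.totalDegree) (i : Fin r) : ¬Q ^ e ∣ G i :=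
    hQ.not_pow_dvd_of_pairwise_common_factor he hG0 hhom
      (fun i j hij => (hgcd i j hij).imp fun _ hD => ⟨hD.1, hD.2.1, hD.2.2.1⟩) hcop i
  have linear i Q (hQ : Irreducible Q) (hQi : Q ∣ G i) : Q.totalDegree ≤ 1 := by
    by_contra! hdeg
    exact not_dvd hQ.prime (e := 1) (by omega) i (by rwa [pow_one])
  have squarefree i H (hH : IsHomogeneous H 1) (hH0 : H ≠ 0) : ¬H ^ 2 ∣ G i :=
    not_dvd (irreducible_of_isHomogeneous_one hH hH0).prime (by rw [hH.totalDegree hH0]) i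
  refine ⟨linear, squarefree, fun i => ?_⟩
  obtain ⟨H, hH, hprod⟩ :=
    (hhom i).exists_eq_prod_of_totalDegree_le_one (hG0 i) (by omega) (linear i)
  refine ⟨H, hH, fun s t hst c hc => squarefree i (H t) (hH t).1 (hH t).2 ?_, hprod⟩
  calc H t ^ 2 ∣ H s * H t := ⟨C c, by rw [hc]; ring⟩
    _ ∣ G i := hprod ▸ Finset.mul_dvd_prod_of_ne H hst

/-- Let `k ≥ 2` and `G₁,…,G_r` be linearly independent homogeneous polynomials of
degree `k` in `F_q[x₀,…,x_m]` such that any two have a gcd of degree `k-1` and all of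
them are coprime. Then no `Gᵢ` has an irreducible factor of degree `≥ 2`, no `Gᵢ` is
divisible by the square of a linear form, and consequently each `Gᵢ` is a product of
`k` pairwise non-proportional homogeneous linear polynomials. -/
theorem coprime_close_family_factors (q k m r : ℕ) {K : Type} [Field K] [Fintype K]
    (hq : Fintype.card K = q) (hk : 2 ≤ k) (hr : 1 ≤ r)
    (G : Fin r → MvPolynomial (Fin (m + 1)) K)
    (hli : LinearIndependent K G) (hhom : ∀ i, (G i).IsHomogeneous k)
    (hgcd : ∀ i j, i ≠ j → ∃ D : MvPolynomial (Fin (m + 1)) K,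
      D.IsHomogeneous (k - 1) ∧ D ∣ G i ∧ D ∣ G j ∧
      ∀ E : MvPolynomial (Fin (m + 1)) K, E ∣ G i → E ∣ G j → E ∣ D)
    (hcop : ∀ E : MvPolynomial (Fin (m + 1)) K, (∀ i, E ∣ G i) → IsUnit E) :
    (∀ i, ∀ Q : MvPolynomial (Fin (m + 1)) K, Irreducible Q → Q ∣ G i →
      Q.totalDegree ≤ 1) ∧
    (∀ i, ∀ H : MvPolynomial (Fin (m + 1)) K, H.IsHomogeneous 1 → H ≠ 0 →
      ¬ (H ^ 2 ∣ G i)) ∧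
    (∀ i, ∃ H : Fin k → MvPolynomial (Fin (m + 1)) K,
      (∀ t, (H t).IsHomogeneous 1 ∧ H t ≠ 0) ∧
      (∀ s t, s ≠ t → ∀ c : K, H s ≠ C c * H t) ∧
      G i = ∏ t, H t) :=
  coprime_close_family_factors_general k m r hk G hli hhom hgcd hcop
end
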